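/- Let H = Σ_{a} s_a · A_a ⊗ B_a be a Hermitian operator on H_L ⊗ H_R, with {A_a} and {B_a} orthonormal families under the normalized Frobenius inner product and s_1 ≥ s_2 ≥ … ≥ s_D ≥ 0. If the singular values grouped into degenerate multiplets with a multiplet {a : s_a = s} of size D_s, then for each distinct positive singular value s the partial sum Σ_{a: s_a = s} s · A_a ⊗ B_a equals its own Hermitian adjoint. -/

import Mathlib

open Matrix
open scoped Kronecker

/-- Normalized Frobenius inner product `⟨A,B⟩ = Tr(A†B)/Tr(1)`. -/
noncomputable def nFrobInner {n : Type*} [Fintype n] [DecidableEq n]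
    (A B : Matrix n n ℂ) : ℂ :=
  (Aᴴ * B).trace / (Fintype.card n : ℂ)

/-!
Realigning the indices, `((i, k), (j, l)) ↦ ((j, i), (l, k))`, turns `∑ s_a • A_a ⊗ B_a` into
`M = U diag(s) Vᵀ`, where the columns of `U` and `V` are the vectorized `A_a` and `B_a`, and
Frobenius orthonormality reads `Uᴴ U = c • 1`, `Vᴴ V = d • 1` with `c = |L|`, `d = |R|`.
Then `p(M Mᴴ) M = U diag(p(c d s_a²) s_a) Vᵀ` for every polynomial `p`; interpolating the
indicator of `c d t²` on the nodes `c d s_a²` (which separate distinct `s_a ≥ 0`) exhibits the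
block of singular value `t` as `p(M Mᴴ) M`, a function of `M` alone. Hermiticity says that
`(A_aᴴ, B_aᴴ)` is a second such decomposition of the same operator, so the blocks agree.
-/

open Polynomial

theorem Polynomial.exists_eval_eq_on_finset {K : Type*} [Field K] (S : Finset K) (f : K → K) :
    ∃ p : K[X], ∀ x ∈ S, p.eval x = f x := by
  classical
  exact ⟨Lagrange.interpolate S id f, fun _ hx =>
    Lagrange.eval_interpolate_at_node f Function.injective_id.injOn hx⟩

namespace Matrix

section SingularBlock

variable {I J ι : Type*} [Fintype ι] [DecidableEq ι]

theorem aeval_diagonal {R : Type*} [CommSemiring R] (v : ι → R) (p : R[X]) :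
    aeval (diagonal v) p = diagonal fun a => p.eval (v a) := by
  rw [← diagonalAlgHom_apply R, aeval_algHom_apply, aeval_pi_apply, diagonalAlgHom_apply]
  simp only [coe_aeval_eq_eval]

theorem aeval_mul_eq_mul_aeval_of_mul_eq [Fintype I] [DecidableEq I] {R : Type*}
    [CommSemiring R] {X : Matrix I I R} {U : Matrix I ι R} {Λ : Matrix ι ι R}
    (h : X * U = U * Λ) (p : R[X]) :
    aeval X p * U = U * aeval Λ p := by
  have hpow : ∀ n : ℕ, X ^ n * U = U * Λ ^ n := fun n => by
    induction n with
    | zero => simp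
    | succ n ih => rw [pow_succ, Matrix.mul_assoc, h, ← Matrix.mul_assoc, ih, Matrix.mul_assoc,
        pow_succ]
  induction p using Polynomial.induction_on' with
  | add p q hp hq => simp only [map_add, Matrix.add_mul, Matrix.mul_add, hp, hq]
  | monomial n r =>
    simp only [aeval_monomial, Algebra.algebraMap_eq_smul_one, Matrix.smul_mul, Matrix.mul_smul,
      Matrix.one_mul, hpow]

theorem aeval_mul_self_conjTranspose_mul [Fintype I] [DecidableEq I] [Fintype J]
    {U : Matrix I ι ℂ} {V : Matrix J ι ℂ} {c d : ℂ} (hU : Uᴴ * U = c • 1) (hV : Vᴴ * V = d • 1)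
    {s : ι → ℝ} {M : Matrix I J ℂ} (hM : M = U * diagonal (fun a => (s a : ℂ)) * Vᵀ) (p : ℂ[X]) :
    aeval (M * Mᴴ) p * M
      = U * diagonal (fun a => p.eval (c * d * (s a : ℂ) ^ 2) * s a) * Vᵀ := by
  have hVT : Vᵀ * Vᵀᴴ = d • 1 := by
    rw [transpose_conjTranspose, ← conjTranspose_transpose, ← transpose_mul, hV,
      transpose_smul, transpose_one]
  have hS : (diagonal fun a => (s a : ℂ))ᴴ = diagonal fun a => (s a : ℂ) := by
    rw [diagonal_conjTranspose]
    congr 1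
    ext a
    simp
  have heigen : M * Mᴴ * U = U * diagonal (fun a => c * d * (s a : ℂ) ^ 2) := by
    simp only [hM, conjTranspose_mul, hS, Matrix.mul_assoc]
    rw [hU, ← Matrix.mul_assoc Vᵀ, hVT]
    congr 1
    simp only [Matrix.smul_mul, Matrix.mul_smul, Matrix.one_mul, Matrix.mul_one, smul_smul,
      diagonal_mul_diagonal, ← diagonal_smul]
    congr 1
    ext a
    simp only [Pi.smul_apply, smul_eq_mul]
    ring
  calc aeval (M * Mᴴ) p * M
        = aeval (M * Mᴴ) p * U * (diagonal (fun a => (s a : ℂ)) * Vᵀ) := by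
        rw [Matrix.mul_assoc (aeval (M * Mᴴ) p) U, ← Matrix.mul_assoc U, ← hM]
    _ = U * diagonal (fun a => p.eval (c * d * (s a : ℂ) ^ 2))
          * (diagonal (fun a => (s a : ℂ)) * Vᵀ) := by
        rw [aeval_mul_eq_mul_aeval_of_mul_eq heigen, aeval_diagonal]
    _ = _ := by rw [← Matrix.mul_assoc, Matrix.mul_assoc U, diagonal_mul_diagonal]

noncomputable def singularBlock (U : Matrix I ι ℂ) (s : ι → ℝ) (V : Matrix J ι ℂ) (t : ℝ) :
    Matrix I J ℂ :=
  U * diagonal (fun a => if s a = t then (s a : ℂ) else 0) * Vᵀ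

theorem singularBlock_eq_of_mul_diagonal_mul_eq [Fintype I] [DecidableEq I] [Fintype J]
    {U U' : Matrix I ι ℂ} {V V' : Matrix J ι ℂ}
    {c d : ℂ} (hc : c ≠ 0) (hd : d ≠ 0) (hU : Uᴴ * U = c • 1) (hU' : U'ᴴ * U' = c • 1)
    (hV : Vᴴ * V = d • 1) (hV' : V'ᴴ * V' = d • 1) {s : ι → ℝ} (hs : ∀ a, 0 ≤ s a)
    (h : U * diagonal (fun a => (s a : ℂ)) * Vᵀ = U' * diagonal (fun a => (s a : ℂ)) * V'ᵀ)
    {t : ℝ} (ht : 0 ≤ t) :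
    singularBlock U s V t = singularBlock U' s V' t := by
  obtain ⟨p, hp⟩ := Polynomial.exists_eval_eq_on_finset
    (Finset.univ.image fun a => c * d * (s a : ℂ) ^ 2)
    fun x => if x = c * d * (t : ℂ) ^ 2 then 1 else 0
  have hsep : ∀ a, p.eval (c * d * (s a : ℂ) ^ 2) * s a = if s a = t then (s a : ℂ) else 0 := by
    intro a
    have hnode : c * d * (s a : ℂ) ^ 2 = c * d * (t : ℂ) ^ 2 ↔ s a = t := by
      rw [mul_right_inj' (mul_ne_zero hc hd), ← pow_left_inj₀ (hs a) ht two_ne_zero]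
      exact_mod_cast Iff.rfl
    simp only [hp _ (Finset.mem_image_of_mem _ (Finset.mem_univ a)), hnode, ite_mul, one_mul,
      zero_mul]
  have key := aeval_mul_self_conjTranspose_mul hU hV (s := s) rfl p
  rw [h, aeval_mul_self_conjTranspose_mul hU' hV' (s := s) rfl p] at key
  simpa only [singularBlock, hsep] using key.symm

end SingularBlock

section Realign

variable {ι l m n p α : Type*}

def realign (X : Matrix (l × n) (m × p) α) : Matrix (m × l) (p × n) α :=
  of fun ji qk => X (ji.2, qk.2) (ji.1, qk.1)

theorem realign_injective : Function.Injective (realign : Matrix (l × n) (m × p) α → _) :=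
  fun _ _ h => ext fun ik jq => congrFun (congrFun h (jq.1, ik.1)) (jq.2, ik.2)

def vecColumns (A : ι → Matrix m n α) : Matrix (n × m) ι α :=
  of fun x a => vec (A a) x

theorem realign_sum_smul_kronecker [CommSemiring α] [Fintype ι] [DecidableEq ι] (s : ι → α)
    (A : ι → Matrix l m α) (B : ι → Matrix n p α) :
    realign (∑ a, s a • (A a ⊗ₖ B a)) = vecColumns A * diagonal s * (vecColumns B)ᵀ := by
  ext x y
  rw [mul_apply]
  simp only [realign, vecColumns, of_apply, sum_apply, smul_apply, kroneckerMap_apply,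
    smul_eq_mul, mul_diagonal, transpose_apply, vec]
  exact Finset.sum_congr rfl fun a _ => by ring

theorem conjTranspose_vecColumns_mul_vecColumns [Fintype m] [Fintype n] [CommSemiring α]
    [StarRing α] (A : ι → Matrix m n α) :
    (vecColumns A)ᴴ * vecColumns A = of fun a b => ((A a)ᴴ * A b).trace := by
  ext a b
  exact star_vec_dotProduct_vec (A a) (A b)

theorem realign_sum_filter_smul_kronecker [Fintype ι] [DecidableEq ι] (s : ι → ℝ)
    (A : ι → Matrix m m ℂ) (B : ι → Matrix n n ℂ) (t : ℝ) :
    realign (∑ a ∈ Finset.univ.filter (fun a => s a = t), (s a : ℂ) • (A a ⊗ₖ B a))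
      = singularBlock (vecColumns A) s (vecColumns B) t := by
  rw [Finset.sum_filter, singularBlock, ← realign_sum_smul_kronecker]
  congr 1
  refine Finset.sum_congr rfl fun a _ => ?_
  split_ifs <;> simp

end Realign

end Matrix

section Frobenius

variable {ι m n : Type*}

theorem trace_conjTranspose_mul_eq_nFrobInner_mul [Fintype n] [DecidableEq n]
    (A B : Matrix n n ℂ) :
    (Aᴴ * B).trace = nFrobInner A B * Fintype.card n := by
  rcases isEmpty_or_nonempty n with _ | _
  · simp [Matrix.trace]
  · rw [nFrobInner, div_mul_cancel₀ _ (Nat.cast_ne_zero.mpr Fintype.card_ne_zero)]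

theorem nFrobInner_conjTranspose [Fintype n] [DecidableEq n] (A B : Matrix n n ℂ) :
    nFrobInner Aᴴ Bᴴ = nFrobInner B A := by
  rw [nFrobInner, nFrobInner, conjTranspose_conjTranspose, trace_mul_comm]

def FrobOrthonormal [Fintype n] [DecidableEq n] [DecidableEq ι] (A : ι → Matrix n n ℂ) : Prop :=
  ∀ a b, nFrobInner (A a) (A b) = if a = b then 1 else 0

theorem FrobOrthonormal.conjTranspose [Fintype n] [DecidableEq n] [DecidableEq ι]
    {A : ι → Matrix n n ℂ} (hA : FrobOrthonormal A) :
    FrobOrthonormal fun a => (A a)ᴴ := fun a b => by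
  rw [nFrobInner_conjTranspose, hA]
  exact if_congr eq_comm rfl rfl

theorem FrobOrthonormal.conjTranspose_vecColumns_mul_vecColumns [Fintype n] [DecidableEq n]
    [DecidableEq ι] {A : ι → Matrix n n ℂ} (hA : FrobOrthonormal A) :
    (vecColumns A)ᴴ * vecColumns A = (Fintype.card n : ℂ) • 1 := by
  ext a b
  rw [Matrix.conjTranspose_vecColumns_mul_vecColumns, of_apply,
    trace_conjTranspose_mul_eq_nFrobInner_mul, hA, Matrix.smul_apply, one_apply, smul_eq_mul]
  split_ifs <;> simp

theorem FrobOrthonormal.sum_filter_smul_kronecker_eq [Fintype m] [DecidableEq m] [Fintype n]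
    [DecidableEq n] [Fintype ι] [DecidableEq ι]
    {A A' : ι → Matrix m m ℂ} {B B' : ι → Matrix n n ℂ}
    (hA : FrobOrthonormal A) (hA' : FrobOrthonormal A') (hB : FrobOrthonormal B)
    (hB' : FrobOrthonormal B') {s : ι → ℝ} (hs : ∀ a, 0 ≤ s a)
    (h : ∑ a, (s a : ℂ) • (A a ⊗ₖ B a) = ∑ a, (s a : ℂ) • (A' a ⊗ₖ B' a)) {t : ℝ} (ht : 0 ≤ t) :
    ∑ a ∈ Finset.univ.filter (fun a => s a = t), (s a : ℂ) • (A a ⊗ₖ B a)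
      = ∑ a ∈ Finset.univ.filter (fun a => s a = t), (s a : ℂ) • (A' a ⊗ₖ B' a) := by
  rcases isEmpty_or_nonempty m with _ | _
  · ext ⟨i, _⟩; exact isEmptyElim i
  rcases isEmpty_or_nonempty n with _ | _
  · ext ⟨_, k⟩; exact isEmptyElim k
  apply realign_injective
  rw [realign_sum_filter_smul_kronecker, realign_sum_filter_smul_kronecker]
  refine singularBlock_eq_of_mul_diagonal_mul_eq
    (Nat.cast_ne_zero.mpr Fintype.card_ne_zero) (Nat.cast_ne_zero.mpr Fintype.card_ne_zero)
    hA.conjTranspose_vecColumns_mul_vecColumns hA'.conjTranspose_vecColumns_mul_vecColumns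
    hB.conjTranspose_vecColumns_mul_vecColumns hB'.conjTranspose_vecColumns_mul_vecColumns
    hs ?_ ht
  rw [← realign_sum_smul_kronecker, ← realign_sum_smul_kronecker, h]

theorem conjTranspose_sum_smul_kronecker {ι : Type*} (S : Finset ι) (s : ι → ℝ)
    (A : ι → Matrix m m ℂ) (B : ι → Matrix n n ℂ) :
    (∑ a ∈ S, (s a : ℂ) • (A a ⊗ₖ B a))ᴴ = ∑ a ∈ S, (s a : ℂ) • ((A a)ᴴ ⊗ₖ (B a)ᴴ) := by
  simp [conjTranspose_sum, conjTranspose_smul, conjTranspose_kronecker]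

end Frobenius

theorem stmt1_general {L R : Type*} [Fintype L] [DecidableEq L] [Fintype R] [DecidableEq R]
    (D : ℕ) (s : Fin D → ℝ)
    (A : Fin D → Matrix L L ℂ) (B : Fin D → Matrix R R ℂ)
    (hnn : ∀ a, 0 ≤ s a)
    (horthA : ∀ a b, nFrobInner (A a) (A b) = if a = b then 1 else 0)
    (horthB : ∀ a b, nFrobInner (B a) (B b) = if a = b then 1 else 0)
    (hHerm : (∑ a : Fin D, (s a : ℂ) • (A a ⊗ₖ B a)).IsHermitian) :
    ∀ t : ℝ, 0 < t →
      (∑ a ∈ Finset.univ.filter (fun a => s a = t),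
        (s a : ℂ) • (A a ⊗ₖ B a)).IsHermitian := by
  intro t ht
  have hadj : ∑ a, (s a : ℂ) • ((A a)ᴴ ⊗ₖ (B a)ᴴ) = ∑ a, (s a : ℂ) • (A a ⊗ₖ B a) := by
    rw [← conjTranspose_sum_smul_kronecker, hHerm.eq]
  rw [IsHermitian, conjTranspose_sum_smul_kronecker]
  exact FrobOrthonormal.sum_filter_smul_kronecker_eq (FrobOrthonormal.conjTranspose horthA)
    horthA (FrobOrthonormal.conjTranspose horthB) horthB hnn hadj ht.le

/-- For a Hermitian operator `H = Σ_a s_a A_a ⊗ B_a` with orthonormal families and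
decreasingly ordered nonnegative singular values, each block of fixed positive singular
value `s` is itself Hermitian. -/
theorem stmt1 {L R : Type*} [Fintype L] [DecidableEq L] [Fintype R] [DecidableEq R]
    (D : ℕ) (s : Fin D → ℝ)
    (A : Fin D → Matrix L L ℂ) (B : Fin D → Matrix R R ℂ)
    (hmono : Antitone s) (hnn : ∀ a, 0 ≤ s a)
    (horthA : ∀ a b, nFrobInner (A a) (A b) = if a = b then 1 else 0)
    (horthB : ∀ a b, nFrobInner (B a) (B b) = if a = b then 1 else 0)
    (hHerm : (∑ a : Fin D, (s a : ℂ) • (A a ⊗ₖ B a)).IsHermitian) :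
    ∀ t : ℝ, 0 < t →
      (∑ a ∈ Finset.univ.filter (fun a => s a = t),
        (s a : ℂ) • (A a ⊗ₖ B a)).IsHermitian :=
  stmt1_general D s A B hnn horthA horthB hHerm
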